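/- For every s ∈ ℝ with π/8 ≤ s₁ − s ≤ π/2, the derivative of Ψ satisfies |Ψ'(s)| ≥ 1/2. -/

import Mathlib

/-!
The chord of the helix depends only on the parameter difference:
`Ψ(s) = 2 - 2 cos (a (s - s₁)) + (1 - a²)(s - s₁)²`, so with `r = s₁ - s` one gets
`|Ψ'(s)| = 2 (a sin (a r) + (1 - a²) r)`. Jordan's inequality `sin x ≥ 2x/π` on `[0, π/2]`
bounds this below by `4r/π`, which is at least `1/2` once `r ≥ π/8`.
-/

/-- The circular helix `u(s) = (cos as, sin as, √(1−a²)·s)` in `ℝ³` (Euclidean). -/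
noncomputable def helix (a : ℝ) (s : ℝ) : EuclideanSpace ℝ (Fin 3) :=
  (WithLp.equiv 2 (Fin 3 → ℝ)).symm
    ![Real.cos (a * s), Real.sin (a * s), Real.sqrt (1 - a ^ 2) * s]

open Real

theorem helix_sub_norm_sq {a : ℝ} (ha : a ^ 2 ≤ 1) (s t : ℝ) :
    ‖helix a t - helix a s‖ ^ 2 = 2 - 2 * cos (a * (t - s)) + (1 - a ^ 2) * (t - s) ^ 2 := by
  rw [EuclideanSpace.norm_eq, sq_sqrt (by positivity)]
  simp only [helix, Fin.sum_univ_three, WithLp.equiv_symm_apply, ← WithLp.toLp_sub,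
    PiLp.toLp_apply, Pi.sub_apply, Matrix.cons_val_zero, Matrix.cons_val_one,
    Matrix.cons_val_two, Matrix.head_cons, Matrix.tail_cons, norm_eq_abs, sq_abs]
  rw [mul_sub a t s, cos_sub, ← mul_sub, mul_pow, sq_sqrt (by linarith)]
  nlinarith [sin_sq_add_cos_sq (a * t), sin_sq_add_cos_sq (a * s)]

theorem hasDerivAt_helix_sub_norm_sq {a : ℝ} (ha : a ^ 2 ≤ 1) (s t : ℝ) :
    HasDerivAt (fun t => ‖helix a t - helix a s‖ ^ 2)
      (2 * a * sin (a * (t - s)) + 2 * (1 - a ^ 2) * (t - s)) t := by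
  simp only [helix_sub_norm_sq ha s]
  have hlin : HasDerivAt (fun t => t - s) 1 t := (hasDerivAt_id t).sub_const s
  have hcos := ((hlin.const_mul a).cos.const_mul 2).const_sub 2
  have hsq := (hlin.fun_pow 2).const_mul (1 - a ^ 2)
  exact (hcos.add hsq).congr_deriv (by push_cast; ring)

theorem two_div_pi_mul_le_mul_sin_add {a r : ℝ} (ha0 : 0 ≤ a) (ha1 : a ≤ 1) (hr0 : 0 ≤ r)
    (hr : r ≤ π / 2) : 2 / π * r ≤ a * sin (a * r) + (1 - a ^ 2) * r := by
  have hjordan : 2 / π * (a * r) ≤ sin (a * r) :=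
    mul_le_sin (by positivity) (by nlinarith)
  have h2π : 2 / π ≤ 1 := by rw [div_le_one pi_pos]; linarith [pi_gt_three]
  have hshrink : (1 - a ^ 2) * (2 / π * r) ≤ (1 - a ^ 2) * r :=
    mul_le_mul_of_nonneg_left (by nlinarith) (by nlinarith)
  calc 2 / π * r ≤ a ^ 2 * (2 / π * r) + (1 - a ^ 2) * r := by linarith
    _ = a * (2 / π * (a * r)) + (1 - a ^ 2) * r := by ring
    _ ≤ a * sin (a * r) + (1 - a ^ 2) * r := by gcongr

/-- if `π/8 ≤ s₁ − s ≤ π/2` then `|Ψ'(s)| ≥ 1/2`,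
where `Ψ(s) = ‖u(s) − u(s₁)‖²`. -/
theorem statement12 (a : ℝ) (ha0 : 0 < a) (ha1 : a < 1) (s₁ : ℝ) :
    ∀ s : ℝ, Real.pi / 8 ≤ s₁ - s → s₁ - s ≤ Real.pi / 2 →
      1 / 2 ≤ |deriv (fun t => ‖helix a t - helix a s₁‖ ^ 2) s| := by
  intro s h₁ h₂
  have ha : a ^ 2 ≤ 1 := by nlinarith
  have hr0 : 0 ≤ s₁ - s := le_trans (by positivity) h₁
  have hbound := two_div_pi_mul_le_mul_sin_add ha0.le ha1.le hr0 h₂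
  have hderiv : deriv (fun t => ‖helix a t - helix a s₁‖ ^ 2) s
      = -(2 * (a * sin (a * (s₁ - s)) + (1 - a ^ 2) * (s₁ - s))) := by
    rw [(hasDerivAt_helix_sub_norm_sq ha s₁ s).deriv, ← neg_sub s₁ s, mul_neg, sin_neg]
    ring
  have hquarter : 1 / 2 ≤ 2 * (2 / π * (s₁ - s)) := by
    rw [← mul_assoc, mul_div_assoc', div_mul_eq_mul_div, le_div_iff₀ pi_pos]
    linarith
  rw [hderiv, abs_neg, abs_of_nonneg (by linarith)]
  linarith
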